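/- arXiv:funct-an/9604001 — 2 statements merged into one kernel-verified Lean document; each statement's English description precedes it below -/
import Mathlib

section
/- Let B be a C*-algebra and X a closed subspace of B such that X X* X ⊆ X (closed linear spans of products). Set C = closure of span(XX*) and D = closure of span(X*X). Then C and D are C*-subalgebras of B, and X is a C–D imprimitivity bimodule with module actions given by multiplication in B and inner products ⟨x,y⟩_C = xy* and ⟨x,y⟩_D = x*y. -/
/-! Each property is checked on the generators `x y*` and `x* y`, where it is an instance of
`X X* X ⊆ X`; it then spreads to their linear span by linearity and to the closure because
multiplication and the involution are continuous and `X` is closed. -/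

namespace Submodule

variable {R A : Type*} [CommSemiring R] [Semiring A] [Algebra R A] [TopologicalSpace A]
  {S : Set A}

theorem star_mem_closure_span [StarRing R] [StarRing A] [StarModule R A] [ContinuousStar A]
    (h : ∀ a ∈ S, star a ∈ span R S) {a : A} (ha : a ∈ closure (span R S : Set A)) :
    star a ∈ closure (span R S : Set A) :=
  map_mem_closure continuous_star ha
    (span_le.mpr h : span R S ≤ (span R S).comap (starLinearEquiv R (A := A)).toLinearMap)

variable [ContinuousMul A]

theorem mul_mem_closure_span (h : ∀ a ∈ S, ∀ b ∈ S, a * b ∈ span R S)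
    {a b : A} (ha : a ∈ closure (span R S : Set A)) (hb : b ∈ closure (span R S : Set A)) :
    a * b ∈ closure (span R S : Set A) := by
  have hmul : span R S * span R S ≤ span R S := by
    rw [span_mul_span, span_le]
    rintro _ ⟨a, ha, b, hb, rfl⟩
    exact h a ha b hb
  exact map_mem_closure₂ continuous_mul ha hb (mul_le.mp hmul)

variable {X : Submodule R A}

theorem mul_mem_of_mem_closure_span (hX : IsClosed (X : Set A))
    (h : ∀ a ∈ S, ∀ x ∈ X, a * x ∈ X) {a x : A} (ha : a ∈ closure (span R S : Set A))
    (hx : x ∈ X) : a * x ∈ X :=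
  closure_minimal
    (span_le.mpr fun a ha ↦ h a ha x hx : span R S ≤ X.comap (LinearMap.mulRight R x))
    (hX.preimage (continuous_mul_const x)) ha

theorem mul_mem_of_mem_closure_span' (hX : IsClosed (X : Set A))
    (h : ∀ a ∈ S, ∀ x ∈ X, x * a ∈ X) {a x : A} (ha : a ∈ closure (span R S : Set A))
    (hx : x ∈ X) : x * a ∈ X :=
  closure_minimal
    (span_le.mpr fun a ha ↦ h a ha x hx : span R S ≤ X.comap (LinearMap.mulLeft R x))
    (hX.preimage (continuous_const_mul x)) ha

end Submodule

open Submodule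

theorem stmt_15_general {B : Type*} [NormedRing B] [StarRing B] [CStarRing B] [NormedAlgebra ℂ B]
    [StarModule ℂ B]
    (X : Submodule ℂ B) (hXc : IsClosed (X : Set B))
    (hXXX : ∀ x ∈ X, ∀ y ∈ X, ∀ z ∈ X, x * star y * z ∈ X) :
    (∀ c ∈ closure (Submodule.span ℂ {w : B | ∃ x ∈ X, ∃ y ∈ X, w = x * star y} : Set B),
      ∀ c' ∈ closure (Submodule.span ℂ {w : B | ∃ x ∈ X, ∃ y ∈ X, w = x * star y} : Set B),
        c * c' ∈ closure (Submodule.span ℂ {w : B | ∃ x ∈ X, ∃ y ∈ X, w = x * star y} : Set B)) ∧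
    (∀ c ∈ closure (Submodule.span ℂ {w : B | ∃ x ∈ X, ∃ y ∈ X, w = x * star y} : Set B),
      star c ∈ closure (Submodule.span ℂ {w : B | ∃ x ∈ X, ∃ y ∈ X, w = x * star y} : Set B)) ∧
    (∀ d ∈ closure (Submodule.span ℂ {w : B | ∃ x ∈ X, ∃ y ∈ X, w = star x * y} : Set B),
      ∀ d' ∈ closure (Submodule.span ℂ {w : B | ∃ x ∈ X, ∃ y ∈ X, w = star x * y} : Set B),
        d * d' ∈ closure (Submodule.span ℂ {w : B | ∃ x ∈ X, ∃ y ∈ X, w = star x * y} : Set B)) ∧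
    (∀ d ∈ closure (Submodule.span ℂ {w : B | ∃ x ∈ X, ∃ y ∈ X, w = star x * y} : Set B),
      star d ∈ closure (Submodule.span ℂ {w : B | ∃ x ∈ X, ∃ y ∈ X, w = star x * y} : Set B)) ∧
    (∀ c ∈ closure (Submodule.span ℂ {w : B | ∃ x ∈ X, ∃ y ∈ X, w = x * star y} : Set B),
      ∀ x ∈ X, c * x ∈ X) ∧
    (∀ x ∈ X, ∀ d ∈ closure (Submodule.span ℂ {w : B | ∃ x ∈ X, ∃ y ∈ X, w = star x * y} : Set B),
      x * d ∈ X) ∧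
    (∀ x ∈ X, ∀ y ∈ X,
      x * star y ∈ closure (Submodule.span ℂ {w : B | ∃ x ∈ X, ∃ y ∈ X, w = x * star y} : Set B)) ∧
    (∀ x ∈ X, ∀ y ∈ X,
      star x * y ∈ closure (Submodule.span ℂ {w : B | ∃ x ∈ X, ∃ y ∈ X, w = star x * y} : Set B)) ∧
    (∀ x ∈ X, ∀ y ∈ X, ∀ z ∈ X, (x * star y) * z = x * (star y * z)) := by
  refine ⟨fun c hc c' hc' ↦ mul_mem_closure_span ?mulC hc hc',
    fun c hc ↦ star_mem_closure_span ?starC hc,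
    fun d hd d' hd' ↦ mul_mem_closure_span ?mulD hd hd',
    fun d hd ↦ star_mem_closure_span ?starD hd,
    fun c hc x hx ↦ mul_mem_of_mem_closure_span hXc ?actC hc hx,
    fun x hx d hd ↦ mul_mem_of_mem_closure_span' hXc ?actD hd hx,
    fun x hx y hy ↦ subset_closure (subset_span ⟨x, hx, y, hy, rfl⟩),
    fun x hx y hy ↦ subset_closure (subset_span ⟨x, hx, y, hy, rfl⟩),
    fun x _ y _ z _ ↦ mul_assoc x (star y) z⟩
  case mulC =>
    rintro _ ⟨x, hx, y, hy, rfl⟩ _ ⟨z, hz, w, hw, rfl⟩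
    exact subset_span ⟨x * star y * z, hXXX x hx y hy z hz, w, hw, by simp only [mul_assoc]⟩
  case mulD =>
    rintro _ ⟨x, hx, y, hy, rfl⟩ _ ⟨z, hz, w, hw, rfl⟩
    exact subset_span ⟨x, hx, y * star z * w, hXXX y hy z hz w hw, by simp only [mul_assoc]⟩
  case starC | starD =>
    rintro _ ⟨x, hx, y, hy, rfl⟩
    exact subset_span ⟨y, hy, x, hx, by rw [star_mul, star_star]⟩
  case actC =>
    rintro _ ⟨x, hx, y, hy, rfl⟩ z hz
    exact hXXX x hx y hy z hz
  case actD =>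
    rintro _ ⟨x, hx, y, hy, rfl⟩ z hz
    rw [← mul_assoc]
    exact hXXX z hz x hx y hy

/-- Let `B` be a C*-algebra and `X` a closed subspace with `X X* X ⊆ X`.  With
`C = closed span (X X*)` and `D = closed span (X* X)`, `C` and `D` are C*-subalgebras of
`B` and `X` is a `C`–`D` imprimitivity bimodule: `C` and `D` are closed under products
and adjoints, `X` is invariant under left multiplication by `C` and right multiplication
by `D`, the inner products `⟨x,y⟩_C = x y*` and `⟨x,y⟩_D = x* y` take values in `C` and
`D` respectively, and satisfy the compatibility `⟨x,y⟩_C · z = x · ⟨y,z⟩_D`. -/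
theorem stmt_15 {B : Type*} [NormedRing B] [StarRing B] [CStarRing B] [NormedAlgebra ℂ B]
    [CompleteSpace B] [StarModule ℂ B]
    (X : Submodule ℂ B) (hXc : IsClosed (X : Set B))
    (hXXX : ∀ x ∈ X, ∀ y ∈ X, ∀ z ∈ X, x * star y * z ∈ X) :
    (∀ c ∈ closure (Submodule.span ℂ {w : B | ∃ x ∈ X, ∃ y ∈ X, w = x * star y} : Set B),
      ∀ c' ∈ closure (Submodule.span ℂ {w : B | ∃ x ∈ X, ∃ y ∈ X, w = x * star y} : Set B),
        c * c' ∈ closure (Submodule.span ℂ {w : B | ∃ x ∈ X, ∃ y ∈ X, w = x * star y} : Set B)) ∧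
    (∀ c ∈ closure (Submodule.span ℂ {w : B | ∃ x ∈ X, ∃ y ∈ X, w = x * star y} : Set B),
      star c ∈ closure (Submodule.span ℂ {w : B | ∃ x ∈ X, ∃ y ∈ X, w = x * star y} : Set B)) ∧
    (∀ d ∈ closure (Submodule.span ℂ {w : B | ∃ x ∈ X, ∃ y ∈ X, w = star x * y} : Set B),
      ∀ d' ∈ closure (Submodule.span ℂ {w : B | ∃ x ∈ X, ∃ y ∈ X, w = star x * y} : Set B),
        d * d' ∈ closure (Submodule.span ℂ {w : B | ∃ x ∈ X, ∃ y ∈ X, w = star x * y} : Set B)) ∧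
    (∀ d ∈ closure (Submodule.span ℂ {w : B | ∃ x ∈ X, ∃ y ∈ X, w = star x * y} : Set B),
      star d ∈ closure (Submodule.span ℂ {w : B | ∃ x ∈ X, ∃ y ∈ X, w = star x * y} : Set B)) ∧
    (∀ c ∈ closure (Submodule.span ℂ {w : B | ∃ x ∈ X, ∃ y ∈ X, w = x * star y} : Set B),
      ∀ x ∈ X, c * x ∈ X) ∧
    (∀ x ∈ X, ∀ d ∈ closure (Submodule.span ℂ {w : B | ∃ x ∈ X, ∃ y ∈ X, w = star x * y} : Set B),
      x * d ∈ X) ∧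
    (∀ x ∈ X, ∀ y ∈ X,
      x * star y ∈ closure (Submodule.span ℂ {w : B | ∃ x ∈ X, ∃ y ∈ X, w = x * star y} : Set B)) ∧
    (∀ x ∈ X, ∀ y ∈ X,
      star x * y ∈ closure (Submodule.span ℂ {w : B | ∃ x ∈ X, ∃ y ∈ X, w = star x * y} : Set B)) ∧
    (∀ x ∈ X, ∀ y ∈ X, ∀ z ∈ X, (x * star y) * z = x * (star y * z)) :=
  stmt_15_general X hXc hXXX
end

section
/- Let X be a C–D imprimitivity bimodule and suppose m ∈ M(X) is a multiplier satisfying ⟨m,m⟩_C = 1 in M(C) and ⟨m,m⟩_D = 1 in M(D). Then the map ψ : X → C defined by ψ(x) = ⟨x,m⟩_C is an isomorphism of left Hilbert C-modules, with inverse c ↦ c·m. -/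
lemma aux_bound {s : ℝ} (hs0 : 0 ≤ s) (hs1 : s ≤ 1) {k : ℕ} (hk : 1 ≤ k) :
    s * (1 - s)^k ≤ 1/k := by
  rcases eq_or_lt_of_le hs0 with h | h
  · rw [← h, zero_mul]; positivity
  · have h1 : (1 - s) * (1 + s) ≤ 1 := by nlinarith
    have h2 : (0:ℝ) < 1 + s := by linarith
    have h3 : (1 - s) ≤ (1 + s)⁻¹ := by
      rw [← one_div]
      exact (le_div_iff₀ h2).mpr h1
    have h4 : (1 - s)^k ≤ ((1 + s)⁻¹)^k := pow_le_pow_left₀ (by linarith) h3 k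
    have h5 : (1:ℝ) + k * s ≤ (1 + s)^k := by
      simpa using one_add_mul_le_pow (a := s) (by linarith) k
    have h7 : ((1+s)^k)⁻¹ ≤ (1 + k*s)⁻¹ := inv_anti₀ (by positivity) h5
    have h8 : (1 + (k:ℝ)*s)⁻¹ ≤ ((k:ℝ)*s)⁻¹ := inv_anti₀ (by positivity) (by linarith)
    have hk' : (0:ℝ) < k := by exact_mod_cast hk
    calc s * (1-s)^k ≤ s * ((k:ℝ)*s)⁻¹ := by
          apply mul_le_mul_of_nonneg_left _ hs0
          calc (1-s)^k ≤ ((1+s)⁻¹)^k := h4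
            _ = ((1+s)^k)⁻¹ := by rw [inv_pow]
            _ ≤ (1 + k*s)⁻¹ := h7
            _ ≤ ((k:ℝ)*s)⁻¹ := h8
      _ = 1/k := by field_simp


lemma aux_approx {E : Type*} [NormedRing E] [StarRing E] [CStarRing E] [NormedAlgebra ℂ E]
    [CompleteSpace E] [StarModule ℂ E] (x : E) {ε : ℝ} (hε : 0 < ε) :
    ∃ n : ℕ, ‖x - x * (1 - (1 - ‖star x * x‖⁻¹ • (star x * x))^n)‖ < ε := by
  rcases subsingleton_or_nontrivial E with hE | hE
  · exact ⟨0, by simpa [Subsingleton.elim x 0] using hε⟩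
  letI : CStarAlgebra E := {}
  set d : E := star x * x with hd_def
  have hd : IsSelfAdjoint d := IsSelfAdjoint.star_mul_self x
  have hspec : ∀ t ∈ spectrum ℝ d, 0 ≤ t := spectrum_star_mul_self_nonneg
  set M : ℝ := ‖d‖ with hM_def
  rcases eq_or_lt_of_le (norm_nonneg d) with hM | hM
  · have hx0 : x = 0 := by
      have h0 : ‖x‖ * ‖x‖ = 0 := by rw [← CStarRing.norm_star_mul_self]; exact hM.symm ▸ rfl
      have : ‖x‖ = 0 := by nlinarith [norm_nonneg x]
      exact norm_eq_zero.mp this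
    exact ⟨0, by simpa [hx0] using hε⟩
  obtain ⟨n, hn⟩ := exists_nat_gt (M / (2 * ε ^ 2))
  have hn1 : 1 ≤ n := by
    by_contra h
    interval_cases n
    · simp at hn
      have : 0 < M / (2 * ε ^ 2) := by positivity
      linarith
  have hn0 : (0:ℝ) < n := by exact_mod_cast hn1
  refine ⟨n, ?_⟩
  set v : E := (1 - M⁻¹ • d)^n with hv_def
  have hxv : x - x * (1 - v) = x * v := by rw [mul_sub, mul_one]; abel
  rw [hxv]
  have h1sa : star (1 - M⁻¹ • d : E) = 1 - M⁻¹ • d := by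
    simp [star_sub, star_smul, hd.star_eq]
  have hvsa : star v = v := by rw [hv_def, star_pow, h1sa]
  have hsq : ‖x * v‖ ^ 2 = ‖v * d * v‖ := by
    rw [sq, ← CStarRing.norm_star_mul_self]
    congr 1
    rw [star_mul, hvsa, mul_assoc, ← mul_assoc (star x) x v, ← hd_def, ← mul_assoc]
  have e1 : cfc (fun t : ℝ => 1 - M⁻¹ * t) d = 1 - M⁻¹ • d := by
    rw [cfc_sub (fun _ : ℝ => (1:ℝ)) (fun t : ℝ => M⁻¹ * t) d,
      cfc_const_one ℝ d, cfc_const_mul M⁻¹ (fun t : ℝ => t) d, cfc_id' ℝ d]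
  have e2 : cfc (fun t : ℝ => (1 - M⁻¹*t)^n) d = v := by
    rw [cfc_pow (fun t : ℝ => 1 - M⁻¹ * t) n d, e1]
  have hcfc : v * d * v = cfc (fun t : ℝ => (1 - M⁻¹ * t)^n * t * (1 - M⁻¹ * t)^n) d := by
    rw [cfc_mul (fun t : ℝ => (1 - M⁻¹*t)^n * t) (fun t : ℝ => (1 - M⁻¹*t)^n) d,
      cfc_mul (fun t : ℝ => (1 - M⁻¹*t)^n) (fun t : ℝ => t) d (by fun_prop) (by fun_prop), e2, cfc_id' ℝ d]
  have hbound : ‖v * d * v‖ ≤ M / (2 * n) := by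
    rw [hcfc]
    apply norm_cfc_le (by positivity)
    intro t ht
    have h1 : 0 ≤ t := hspec t ht
    have h2 : t ≤ M := by
      have := spectrum.norm_le_norm_of_mem ht
      rwa [Real.norm_of_nonneg h1] at this
    set s : ℝ := M⁻¹ * t with hs_def
    have hs0 : 0 ≤ s := by positivity
    have hs1 : s ≤ 1 := by
      rw [hs_def, inv_mul_le_iff₀ hM]; simpa using h2
    have hts : t = M * s := by rw [hs_def, ← mul_assoc, mul_inv_cancel₀ (show M ≠ 0 from hM.ne'), one_mul]
    have key : s * (1 - s)^(2*n) ≤ 1/(2*(n:ℝ)) := by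
      have := aux_bound hs0 hs1 (k := 2*n) (by omega)
      push_cast at this
      linarith
    have hfval : (1 - M⁻¹ * t)^n * t * (1 - M⁻¹ * t)^n = M * (s * (1-s)^(2*n)) := by
      rw [← hs_def, hts]; ring
    have hnonneg : 0 ≤ M * (s * (1-s)^(2*n)) :=
      mul_nonneg (le_of_lt hM) (mul_nonneg hs0 (pow_nonneg (by linarith) _))
    rw [hfval, Real.norm_of_nonneg hnonneg]
    calc M * (s * (1-s)^(2*n)) ≤ M * (1/(2*(n:ℝ))) :=
          mul_le_mul_of_nonneg_left key (le_of_lt hM)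
      _ = M / (2*n) := by ring
  have hlt : M / (2 * n) < ε ^ 2 := by
    rw [div_lt_iff₀ (by linarith)]
    rw [div_lt_iff₀ (by positivity)] at hn
    nlinarith
  have hfin : ‖x * v‖ ^ 2 < ε ^ 2 := by rw [hsq]; linarith
  exact lt_of_pow_lt_pow_left₀ 2 (le_of_lt hε) hfin

/-- Let `X` be a `C`–`D` imprimitivity bimodule (realised concretely inside an ambient
C*-algebra `E`, with `C = closed span (X X*)`, `D = closed span (X* X)`), and let
`m` be a multiplier of `X` (an element with `C·m ⊆ X` and `m·D ⊆ X`) satisfying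
`⟨m,m⟩_C = 1` in `M(C)` (i.e. `c (m m*) = c` for all `c ∈ C`) and `⟨m,m⟩_D = 1` in
`M(D)` (i.e. `(m* m) d = d` for all `d ∈ D`).  Then `ψ : x ↦ ⟨x,m⟩_C = x m*` is an
isomorphism of left Hilbert `C`-modules of `X` onto `C`, with inverse `c ↦ c·m`. -/
theorem stmt_16 {E : Type*} [NormedRing E] [StarRing E] [CStarRing E] [NormedAlgebra ℂ E]
    [CompleteSpace E] [StarModule ℂ E]
    (X : Submodule ℂ E) (hXc : IsClosed (X : Set E))
    (hXXX : ∀ x ∈ X, ∀ y ∈ X, ∀ z ∈ X, x * star y * z ∈ X)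
    (C : Set E) (hC : C = closure (Submodule.span ℂ {w : E | ∃ x ∈ X, ∃ y ∈ X, w = x * star y} : Set E))
    (D : Set E) (hD : D = closure (Submodule.span ℂ {w : E | ∃ x ∈ X, ∃ y ∈ X, w = star x * y} : Set E))
    (m : E) (hCm : ∀ c ∈ C, c * m ∈ X) (hmD : ∀ d ∈ D, m * d ∈ X)
    (hmmC : ∀ c ∈ C, c * (m * star m) = c)
    (hmmD : ∀ d ∈ D, (star m * m) * d = d) :
    Set.BijOn (fun x => x * star m) (X : Set E) C ∧
    (∀ x ∈ X, ∀ y ∈ X, (x * star m) * star (y * star m) = x * star y) ∧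
    (∀ c ∈ C, ∀ x ∈ X, (c * x) * star m = c * (x * star m)) ∧
    (∀ c ∈ C, (c * m) * star m = c) ∧
    (∀ x ∈ X, (x * star m) * m = x) := by
  set SD : Submodule ℂ E := Submodule.span ℂ {w : E | ∃ x ∈ X, ∃ y ∈ X, w = star x * y} with hSD
  set SC : Submodule ℂ E := Submodule.span ℂ {w : E | ∃ x ∈ X, ∃ y ∈ X, w = x * star y} with hSC
  -- basic membership facts
  have memD : ∀ x ∈ X, ∀ y ∈ X, star x * y ∈ D := fun x hx y hy =>
    hD ▸ subset_closure (Submodule.subset_span ⟨x, hx, y, hy, rfl⟩)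
  have memC : ∀ x ∈ X, ∀ y ∈ X, x * star y ∈ C := fun x hx y hy =>
    hC ▸ subset_closure (Submodule.subset_span ⟨x, hx, y, hy, rfl⟩)
  -- X * D ⊆ X
  have XSD : ∀ x ∈ X, ∀ e ∈ SD, x * e ∈ X := by
    intro x hx e he
    induction he using Submodule.span_induction with
    | mem w hw =>
      obtain ⟨a, ha, b, hb, rfl⟩ := hw
      have := hXXX x hx a ha b hb
      rwa [mul_assoc] at this
    | zero => simpa using X.zero_mem
    | add p q hp hq ihp ihq => rw [mul_add]; exact X.add_mem ihp ihq
    | smul c p hp ihp => rw [mul_smul_comm]; exact X.smul_mem c ihp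
  have XD : ∀ x ∈ X, ∀ e ∈ D, x * e ∈ X := by
    intro x hx e he
    rw [hD] at he
    have := map_mem_closure (continuous_mul_left x) he (fun z hz => XSD x hx z hz)
    rwa [hXc.closure_eq] at this
  -- D is closed under multiplication
  have SDSD : ∀ p ∈ SD, ∀ q ∈ SD, p * q ∈ SD := by
    intro p hp
    induction hp using Submodule.span_induction with
    | mem w hw =>
      obtain ⟨a, ha, b, hb, rfl⟩ := hw
      intro q hq
      induction hq using Submodule.span_induction with
      | mem w' hw' =>
        obtain ⟨c, hc, e, he, rfl⟩ := hw'
        have hmemX : b * star c * e ∈ X := hXXX b hb c hc e he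
        have : star a * b * (star c * e) = star a * (b * star c * e) := by
          simp only [mul_assoc]
        rw [this]
        exact Submodule.subset_span ⟨a, ha, b * star c * e, hmemX, rfl⟩
      | zero => simpa using SD.zero_mem
      | add p' q' hp' hq' ihp ihq => rw [mul_add]; exact SD.add_mem ihp ihq
      | smul c p' hp' ihp => rw [mul_smul_comm]; exact SD.smul_mem c ihp
    | zero => intro q hq; simpa using SD.zero_mem
    | add p' q' hp' hq' ihp ihq =>
      intro q hq; rw [add_mul]; exact SD.add_mem (ihp q hq) (ihq q hq)
    | smul c p' hp' ihp =>
      intro q hq; rw [smul_mul_assoc]; exact SD.smul_mem c (ihp q hq)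
  have DD : ∀ p ∈ D, ∀ q ∈ D, p * q ∈ D := by
    have step1 : ∀ p ∈ D, ∀ q ∈ SD, p * q ∈ D := by
      intro p hp q hq
      rw [hD] at hp ⊢
      exact map_mem_closure (f := fun z => z * q) (continuous_mul_right q) hp
        (fun z hz => SDSD z hz q hq)
    intro p hp q hq
    rw [hD] at hq
    have hcl : IsClosed D := hD ▸ isClosed_closure
    have := map_mem_closure (continuous_mul_left p) hq (fun z hz => step1 p hp z hz)
    rwa [hcl.closure_eq] at this
  -- D as a topological closure submodule
  have hDm : ((SD.topologicalClosure : Submodule ℂ E) : Set E) = D := by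
    rw [hD, Submodule.topologicalClosure_coe]
  -- key fact : x * (star m * m) = x for x ∈ X
  have hxs : ∀ x ∈ X, x * (star m * m) = x := by
    intro x hx
    set s : E := star m * m with hs_def
    have hss : star s = s := by rw [hs_def, star_mul, star_star]
    set d : E := star x * x with hd_def
    have hdd : star d = d := by rw [hd_def, star_mul, star_star]
    have hdD : d ∈ D := memD x hx x hx
    have h1 : s * d = d := hmmD d hdD
    have h2 : d * s = d := by
      have := congrArg star h1
      rwa [star_mul, hss, hdd] at this
    have hzero : star (x - x * s) * (x - x * s) = 0 := by
      have e1 : star (x - x * s) = star x - s * star x := by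
        rw [star_sub, star_mul, hss]
      rw [e1, sub_mul, mul_sub, mul_sub]
      have k1 : star x * (x * s) = d * s := by rw [hd_def]; simp only [mul_assoc]
      have k2 : s * star x * x = s * d := by rw [hd_def]; simp only [mul_assoc]
      have k3 : s * star x * (x * s) = s * (d * s) := by
        rw [hd_def]; simp only [mul_assoc]
      rw [k1, k2, k3, h2, ← hd_def, h1]
      abel
    have hnorm : ‖x - x * s‖ * ‖x - x * s‖ = 0 := by
      rw [← CStarRing.norm_star_mul_self, hzero, norm_zero]
    have : x - x * s = 0 := by
      rw [← norm_eq_zero]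
      nlinarith [norm_nonneg (x - x * s)]
    have := sub_eq_zero.mp this
    exact this.symm
  -- (c * m) * star m = c for c ∈ C
  have hcm : ∀ c ∈ C, (c * m) * star m = c := by
    intro c hc
    rw [mul_assoc]
    exact hmmC c hc
  -- MapsTo
  have hmapsto : ∀ x ∈ X, x * star m ∈ C := by
    intro x hx
    rw [hC]
    rw [Metric.mem_closure_iff]
    intro ε hε
    rcases eq_or_lt_of_le (norm_nonneg (star m)) with hm0 | hm0
    · -- star m = 0
      have : star m = 0 := by rw [← norm_eq_zero]; exact hm0.symm
      refine ⟨0, SC.zero_mem, ?_⟩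
      rw [this, mul_zero, dist_self]
      exact hε
    · set δ : ℝ := ε / ‖star m‖ with hδ_def
      have hδ : 0 < δ := div_pos hε hm0
      obtain ⟨n, hn⟩ := aux_approx x hδ
      set d : E := star x * x with hd_def
      set r : ℝ := ‖d‖⁻¹ with hr_def
      set u : E := 1 - (1 - r • d)^n with hu_def
      -- u ∈ D
      have hdD : d ∈ D := memD x hx x hx
      have hrdD : r • d ∈ D := by
        rw [← hDm] at hdD ⊢
        have : r • d = ((r : ℂ)) • d := by
          rw [← algebraMap_smul ℂ r d]
          norm_num
        rw [this]
        exact Submodule.smul_mem _ _ hdD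
      have huD : ∀ k : ℕ, (1 : E) - (1 - r • d)^k ∈ D := by
        intro k
        induction k with
        | zero => simpa using (hD ▸ subset_closure SD.zero_mem)
        | succ k ih =>
          have halg : ∀ a : E, (1:E) - (1 - a)^(k+1)
              = ((1:E) - (1 - a)^k) + a - ((1:E) - (1 - a)^k) * a := by
            intro a
            rw [pow_succ]
            noncomm_ring
          rw [halg (r • d)]
          rw [← hDm] at ih hrdD ⊢
          refine Submodule.sub_mem _ (Submodule.add_mem _ ih hrdD) ?_
          have := DD _ (hDm ▸ ih) _ (hDm ▸ hrdD)
          rwa [← hDm] at this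
      have huD' : u ∈ D := huD n
      -- star u = u
      have hdd : star d = d := by rw [hd_def, star_mul, star_star]
      have hustar : star u = u := by
        rw [hu_def, star_sub, star_one, star_pow, star_sub, star_one, star_smul, star_trivial,
          hdd]
      -- the approximating element
      have hmuX : m * u ∈ X := hmD u huD'
      refine ⟨x * star (m * u), Submodule.subset_span ⟨x, hx, m * u, hmuX, rfl⟩, ?_⟩
      have hrw : x * star (m * u) = (x * u) * star m := by
        rw [star_mul, hustar, ← mul_assoc]
      rw [dist_eq_norm, hrw]
      rw [← sub_mul]
      calc ‖(x - x * u) * star m‖ ≤ ‖x - x * u‖ * ‖star m‖ := norm_mul_le _ _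
        _ < δ * ‖star m‖ := by
            apply mul_lt_mul_of_pos_right _ hm0
            simpa [hu_def, hr_def, hd_def] using hn
        _ = ε := div_mul_cancel₀ ε (ne_of_gt hm0)
  -- items
  refine ⟨⟨fun x hx => hmapsto x hx, ?_, ?_⟩, ?_, ?_, hcm, ?_⟩
  · -- InjOn
    intro x hx y hy hxy
    simp only at hxy
    have := congrArg (· * m) hxy
    rw [mul_assoc, mul_assoc, hxs x hx, hxs y hy] at this
    exact this
  · -- SurjOn
    intro c hc
    exact ⟨c * m, hCm c hc, hcm c hc⟩
  · -- inner product preserved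
    intro x hx y hy
    rw [star_mul, star_star, ← mul_assoc, mul_assoc x (star m) m, hxs x hx]
  · -- C-linearity
    intro c hc x hx
    rw [mul_assoc]
  · -- inverse on X
    intro x hx
    rw [mul_assoc]
    exact hxs x hx
end
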